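/- arXiv:2508.02857 — 2 statements merged into one kernel-verified Lean document; each statement's English description precedes it below -/
import Mathlib

section
/- The cardinality of the set of values 𝕍(T) of a Qunity type T satisfies |𝕍(T)| ≤ 2^{size(T)}, with equality if and only if T contains no occurrence of Void and every sum subtype T₀ ⊕ T₁ of T satisfies size(T₀) = size(T₁). -/
/-- Qunity types. -/
inductive QType : Type
  | void : QType
  | unit : QType
  | sum : QType → QType → QType
  | prod : QType → QType → QType

/-- Number of qubits used to encode a value of the given type. -/
def QType.size : QType → ℕ
  | .void => 0
  | .unit => 0
  | .sum t0 t1 => 1 + max t0.size t1.size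
  | .prod t0 t1 => t0.size + t1.size

/-- The number of classical values `|𝕍(T)|` of a Qunity type. -/
def QType.card : QType → ℕ
  | .void => 0
  | .unit => 1
  | .sum t0 t1 => t0.card + t1.card
  | .prod t0 t1 => t0.card * t1.card

/-- `T` contains no occurrence of `Void`. -/
def QType.noVoid : QType → Prop
  | .void => False
  | .unit => True
  | .sum t0 t1 => t0.noVoid ∧ t1.noVoid
  | .prod t0 t1 => t0.noVoid ∧ t1.noVoid

/-- Every sum subtype `T₀ ⊕ T₁` of `T` satisfies `size T₀ = size T₁`. -/
def QType.balanced : QType → Prop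
  | .void => True
  | .unit => True
  | .sum t0 t1 => t0.size = t1.size ∧ t0.balanced ∧ t1.balanced
  | .prod t0 t1 => t0.balanced ∧ t1.balanced

namespace Nat

theorem mul_eq_mul_iff_of_le {a b c d : ℕ} (hab : a ≤ b) (hcd : c ≤ d) (hb : 0 < b)
    (hd : 0 < d) : a * c = b * d ↔ a = b ∧ c = d := by
  rcases a.eq_zero_or_pos with rfl | ha
  · exact iff_of_false (by simp [hb.ne', hd.ne']) fun h => hb.ne h.1
  · exact mul_eq_mul_iff_eq_and_eq_of_pos hab hcd ha hd

theorem eq_two_pow_max_iff {a m n : ℕ} (ha : a ≤ 2 ^ m) :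
    a = 2 ^ max m n ↔ a = 2 ^ m ∧ n ≤ m := by
  constructor
  · rintro rfl
    have hnm : n ≤ m := (max_le_iff.1 ((Nat.pow_le_pow_iff_right one_lt_two).1 ha)).2
    exact ⟨by rw [max_eq_left hnm], hnm⟩
  · rintro ⟨rfl, hnm⟩
    rw [max_eq_left hnm]

theorem two_pow_one_add_max (m n : ℕ) :
    2 ^ (1 + max m n) = 2 ^ max m n + 2 ^ max m n := by
  rw [pow_add, pow_one, two_mul]

theorem add_le_two_pow_one_add_max {a b m n : ℕ} (ha : a ≤ 2 ^ m) (hb : b ≤ 2 ^ n) :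
    a + b ≤ 2 ^ (1 + max m n) := by
  rw [two_pow_one_add_max]
  exact add_le_add (ha.trans (Nat.pow_le_pow_right two_pos (le_max_left m n)))
    (hb.trans (Nat.pow_le_pow_right two_pos (le_max_right m n)))

theorem add_eq_two_pow_one_add_max_iff {a b m n : ℕ} (ha : a ≤ 2 ^ m) (hb : b ≤ 2 ^ n) :
    a + b = 2 ^ (1 + max m n) ↔ a = 2 ^ m ∧ b = 2 ^ n ∧ m = n := by
  rw [two_pow_one_add_max,
    add_eq_add_iff_eq_and_eq (ha.trans (Nat.pow_le_pow_right two_pos (le_max_left m n)))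
      (hb.trans (Nat.pow_le_pow_right two_pos (le_max_right m n))),
    eq_two_pow_max_iff ha, max_comm, eq_two_pow_max_iff hb]
  exact ⟨fun ⟨⟨ha, hnm⟩, hb, hmn⟩ => ⟨ha, hb, le_antisymm hmn hnm⟩,
    fun ⟨ha, hb, hmn⟩ => ⟨⟨ha, hmn.ge⟩, hb, hmn.le⟩⟩

end Nat

namespace QType

theorem card_le_two_pow_size : ∀ t : QType, t.card ≤ 2 ^ t.size
  | void => Nat.zero_le _
  | unit => le_rfl
  | sum t0 t1 => Nat.add_le_two_pow_one_add_max t0.card_le_two_pow_size t1.card_le_two_pow_size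
  | prod t0 t1 => by
    rw [card, size, pow_add]
    exact Nat.mul_le_mul t0.card_le_two_pow_size t1.card_le_two_pow_size

theorem card_eq_two_pow_size_iff : ∀ t : QType, t.card = 2 ^ t.size ↔ t.noVoid ∧ t.balanced
  | void => by simp [card, size, noVoid]
  | unit => by simp [card, size, noVoid, balanced]
  | sum t0 t1 => by
    rw [card, size, noVoid, balanced,
      Nat.add_eq_two_pow_one_add_max_iff t0.card_le_two_pow_size t1.card_le_two_pow_size,
      t0.card_eq_two_pow_size_iff, t1.card_eq_two_pow_size_iff]
    tauto
  | prod t0 t1 => by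
    rw [card, size, noVoid, balanced, pow_add,
      Nat.mul_eq_mul_iff_of_le t0.card_le_two_pow_size t1.card_le_two_pow_size
        (by positivity) (by positivity),
      t0.card_eq_two_pow_size_iff, t1.card_eq_two_pow_size_iff]
    tauto

end QType

/-- `|𝕍(T)| ≤ 2^{size T}`, with equality iff `T` contains no `Void` and every sum
subtype of `T` is size-balanced. -/
theorem card_le_two_pow_size (t : QType) :
    t.card ≤ 2 ^ t.size ∧ (t.card = 2 ^ t.size ↔ t.noVoid ∧ t.balanced) :=
  ⟨t.card_le_two_pow_size, t.card_eq_two_pow_size_iff⟩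
end

section
/- Semantics of try/catch is trace non-increasing and respects the stated formula: let 𝓔₀ : L(H₀) → L(K) and 𝓔₁ : L(H₁) → L(K) be completely positive trace non-increasing superoperators. Define 𝓕 on product states by 𝓕(ρ₀ ⊗ ρ₁) = Tr(ρ₁)·𝓔₀(ρ₀) + (Tr(ρ₀) − Tr(𝓔₀(ρ₀)))·𝓔₁(ρ₁), extended linearly. Then 𝓕 is a completely positive trace non-increasing superoperator from L(H₀ ⊗ H₁) to L(K), and if 𝓔₀ (or 𝓔₁) is trace-preserving then so is 𝓕. -/
open scoped ComplexOrder Kronecker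

/-- The canonical block extension of a map on matrices: `(Φ ⊗ id_k)` applied to a
block matrix, applying `Φ` to each block. -/
def matExt {n m k : Type*} [Fintype n] [Fintype m] [Fintype k]
    (Φ : Matrix n n ℂ → Matrix m m ℂ) (ρ : Matrix (n × k) (n × k) ℂ) :
    Matrix (m × k) (m × k) ℂ :=
  Matrix.of fun p q => Φ (Matrix.of fun i j => ρ (i, p.2) (j, q.2)) p.1 q.1

/-- A map on matrices is completely positive if all of its block extensions preserve
positive semidefiniteness. -/
def IsCompletelyPositive {n m : Type*} [Fintype n] [Fintype m]
    (Φ : Matrix n n ℂ → Matrix m m ℂ) : Prop :=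
  ∀ (k : Type) [Fintype k] [DecidableEq k],
    ∀ ρ : Matrix (n × k) (n × k) ℂ, ρ.PosSemidef → (matExt Φ ρ).PosSemidef

/-- Partial trace over the second factor. -/
noncomputable def ptrSecond {n k : Type*} [Fintype n] [Fintype k]
    (ρ : Matrix (n × k) (n × k) ℂ) : Matrix n n ℂ :=
  Matrix.of fun i j => ∑ a : k, ρ (i, a) (j, a)

/-- Partial trace over the first factor. -/
noncomputable def ptrFirst {n k : Type*} [Fintype n] [Fintype k]
    (ρ : Matrix (n × k) (n × k) ℂ) : Matrix k k ℂ :=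
  Matrix.of fun a b => ∑ i : n, ρ (i, a) (i, b)

/-- The linear extension of the try/catch semantics
`𝓕(ρ₀ ⊗ ρ₁) = Tr(ρ₁)·𝓔₀(ρ₀) + (Tr(ρ₀) − Tr(𝓔₀(ρ₀)))·𝓔₁(ρ₁)`. -/
noncomputable def tryCatch {dH0 dH1 dK : Type*} [Fintype dH0] [Fintype dH1] [Fintype dK]
    (𝓔₀ : Matrix dH0 dH0 ℂ → Matrix dK dK ℂ)
    (𝓔₁ : Matrix dH1 dH1 ℂ → Matrix dK dK ℂ)
    (ρ : Matrix (dH0 × dH1) (dH0 × dH1) ℂ) : Matrix dK dK ℂ :=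
  𝓔₀ (ptrSecond ρ) + 𝓔₁ (ptrFirst ρ) - 𝓔₁ (ptrFirst (matExt 𝓔₀ ρ))

/-!
Write `catchState 𝓔₀ ρ = Tr₁ ρ - Tr₁ ((𝓔₀ ⊗ id) ρ)`; linearity of `𝓔₁` turns the definition into
`𝓕 = 𝓔₀ ∘ Tr₂ + 𝓔₁ ∘ catchState 𝓔₀`. The `(s, t)` entry of `catchState 𝓔₀ ρ` is `φ (ρₛₜ)` for the
functional `φ = Tr - Tr ∘ 𝓔₀`, which is positive because `𝓔₀` is trace non-increasing. Positive
functionals are completely positive, so `catchState 𝓔₀` is, and `𝓕` is completely positive as a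
sum of composites of such maps. Finally `Tr (catchState 𝓔₀ ρ) = Tr ρ - Tr (𝓔₀ (Tr₂ ρ))`, so
`Tr (𝓕 ρ) ≤ Tr (𝓔₀ (Tr₂ ρ)) + Tr (catchState 𝓔₀ ρ) = Tr ρ`, with equality when `𝓔₁` preserves
traces; when `𝓔₀` does, `catchState 𝓔₀ = 0` and `𝓕 = 𝓔₀ ∘ Tr₂`.
-/

open Matrix

section Blocks

variable {n m r : Type*}

def block (ρ : Matrix (n × r) (n × r) ℂ) (s t : r) : Matrix n n ℂ :=
  ρ.submatrix (·, s) (·, t)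

theorem block_kronecker (A : Matrix n n ℂ) (B : Matrix r r ℂ) (s t : r) :
    block (A ⊗ₖ B) s t = B s t • A := by
  ext i j
  simp [block, mul_comm]

theorem block_eq_conjTranspose_mul_mul [Fintype n] [Fintype r] [DecidableEq n]
    [DecidableEq r] (ρ : Matrix (n × r) (n × r) ℂ) (s t : r) :
    block ρ s t = ((1 : Matrix (n × r) (n × r) ℂ).submatrix id (·, s))ᴴ * ρ *
      (1 : Matrix (n × r) (n × r) ℂ).submatrix id (·, t) := by
  ext i j
  simp [block, mul_apply, one_apply]

theorem matExt_apply [Fintype n] [Fintype m] [Fintype r] (Φ : Matrix n n ℂ → Matrix m m ℂ)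
    (ρ : Matrix (n × r) (n × r) ℂ) (p q : m × r) : matExt Φ ρ p q = Φ (block ρ p.2 q.2) p.1 q.1 :=
  rfl

theorem ptrSecond_eq_sum_block [Fintype n] [Fintype r] (ρ : Matrix (n × r) (n × r) ℂ) :
    ptrSecond ρ = ∑ a, block ρ a a := by
  ext i j
  simp [ptrSecond, block, Matrix.sum_apply]

theorem trace_ptrFirst [Fintype n] [Fintype r] (ρ : Matrix (n × r) (n × r) ℂ) :
    (ptrFirst ρ).trace = ρ.trace := by
  simp only [trace, diag, ptrFirst, of_apply]
  rw [Fintype.sum_prod_type, Finset.sum_comm]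

theorem trace_ptrSecond [Fintype n] [Fintype r] (ρ : Matrix (n × r) (n × r) ℂ) :
    (ptrSecond ρ).trace = ρ.trace := by
  simp only [trace, diag, ptrSecond, of_apply]
  rw [Fintype.sum_prod_type]

theorem ptrSecond_kronecker [Fintype n] [Fintype r] (A : Matrix n n ℂ) (B : Matrix r r ℂ) :
    ptrSecond (A ⊗ₖ B) = B.trace • A := by
  ext i j
  simp [ptrSecond, trace, ← Finset.mul_sum, mul_comm]

theorem posSemidef_ptrSecond [Fintype n] [Fintype r] {ρ : Matrix (n × r) (n × r) ℂ}
    (hρ : ρ.PosSemidef) : (ptrSecond ρ).PosSemidef :=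
  ptrSecond_eq_sum_block ρ ▸ posSemidef_sum _ fun _ _ => hρ.submatrix _

theorem trace_matExt [Fintype n] [Fintype m] [Fintype r] (L : Matrix n n ℂ →ₗ[ℂ] Matrix m m ℂ)
    (ρ : Matrix (n × r) (n × r) ℂ) :
    (matExt L ρ).trace = (L (ptrSecond ρ)).trace := by
  rw [ptrSecond_eq_sum_block, map_sum, trace_sum]
  simp only [trace, diag, matExt_apply, Fintype.sum_prod_type]
  rw [Finset.sum_comm]

end Blocks

/-- Over `ℂ`, nonnegativity of the quadratic form already forces `M` to be Hermitian. -/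
theorem Matrix.posSemidef_of_forall_dotProduct_mulVec_nonneg {n : Type*} [Fintype n]
    {M : Matrix n n ℂ} (h : ∀ x, 0 ≤ star x ⬝ᵥ M *ᵥ x) : M.PosSemidef := by
  classical
  refine .of_dotProduct_mulVec_nonneg ?_ h
  rw [← isSymmetric_toEuclideanLin_iff, LinearMap.isSymmetric_iff_inner_map_self_real]
  intro v
  have hv : inner ℂ (toEuclideanLin M v) v = star (star v.ofLp ⬝ᵥ M *ᵥ v.ofLp) := by
    rw [EuclideanSpace.inner_eq_star_dotProduct, star_dotProduct, star_star, dotProduct_comm]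
    rfl
  rw [hv, Complex.conj_eq_iff_im, Complex.star_def, Complex.conj_im, neg_eq_zero]
  exact (Complex.nonneg_iff.mp (h v.ofLp)).2.symm

/-- Positive functionals are completely positive: the quadratic form of the blockwise image at
`x` is `φ (Pᴴ ρ P)` with `P = ∑ₜ xₜ Eₜ`, where `Eₜ` embeds `n` as the `t`-th block. -/
theorem Matrix.PosSemidef.blockwise {n r : Type*} [Fintype n] [Fintype r]
    {ρ : Matrix (n × r) (n × r) ℂ} (hρ : ρ.PosSemidef) (φ : Matrix n n ℂ →ₗ[ℂ] ℂ)
    (hφ : ∀ σ : Matrix n n ℂ, σ.PosSemidef → 0 ≤ φ σ) :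
    (of fun s t => φ (block ρ s t)).PosSemidef := by
  classical
  refine posSemidef_of_forall_dotProduct_mulVec_nonneg fun x => ?_
  set P := ∑ t, x t • (1 : Matrix (n × r) (n × r) ℂ).submatrix id (·, t)
  have hP : Pᴴ * ρ * P = ∑ s, ∑ t, (star (x s) * x t) • block ρ s t := by
    simp only [P, conjTranspose_sum, conjTranspose_smul, Matrix.sum_mul, Matrix.mul_sum,
      Matrix.smul_mul, Matrix.mul_smul, Finset.smul_sum, smul_smul,
      block_eq_conjTranspose_mul_mul]
    rw [Finset.sum_comm]
    simp_rw [mul_comm]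
  have hquad : star x ⬝ᵥ (of fun s t => φ (block ρ s t)) *ᵥ x = φ (Pᴴ * ρ * P) := by
    simp only [hP, dotProduct, mulVec, of_apply, Pi.star_apply, Finset.mul_sum, map_sum,
      map_smul, smul_eq_mul]
    exact Finset.sum_congr rfl fun s _ => Finset.sum_congr rfl fun t _ => by ring
  rw [hquad]
  exact hφ _ (hρ.conjTranspose_mul_mul_same P)

section CatchState

variable {n m r : Type*} [Fintype n] [Fintype m] [Fintype r]

/-- The unnormalised input of the catch branch: the state of the second register on the event
that `Φ`, applied to the first register, fails. -/
noncomputable def catchState (Φ : Matrix n n ℂ → Matrix m m ℂ) (ρ : Matrix (n × r) (n × r) ℂ) :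
    Matrix r r ℂ :=
  ptrFirst ρ - ptrFirst (matExt Φ ρ)

theorem catchState_apply (Φ : Matrix n n ℂ → Matrix m m ℂ) (ρ : Matrix (n × r) (n × r) ℂ)
    (s t : r) : catchState Φ ρ s t = (block ρ s t).trace - (Φ (block ρ s t)).trace :=
  rfl

theorem catchState_eq_zero_of_trace_eq {Φ : Matrix n n ℂ → Matrix m m ℂ}
    (hΦ : ∀ σ, (Φ σ).trace = σ.trace) (ρ : Matrix (n × r) (n × r) ℂ) : catchState Φ ρ = 0 := by
  ext s t
  rw [catchState_apply, hΦ, sub_self, Matrix.zero_apply]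

theorem trace_catchState (L : Matrix n n ℂ →ₗ[ℂ] Matrix m m ℂ) (ρ : Matrix (n × r) (n × r) ℂ) :
    (catchState L ρ).trace = ρ.trace - (L (ptrSecond ρ)).trace := by
  rw [catchState, trace_sub, trace_ptrFirst, trace_ptrFirst, trace_matExt]

theorem catchState_kronecker (L : Matrix n n ℂ →ₗ[ℂ] Matrix m m ℂ) (A : Matrix n n ℂ)
    (B : Matrix r r ℂ) : catchState L (A ⊗ₖ B) = (A.trace - (L A).trace) • B := by
  ext s t
  rw [catchState_apply, block_kronecker, map_smul, trace_smul, trace_smul, Matrix.smul_apply,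
    smul_eq_mul, smul_eq_mul, smul_eq_mul]
  ring

theorem posSemidef_catchState (L : Matrix n n ℂ →ₗ[ℂ] Matrix m m ℂ)
    (hL : ∀ σ, σ.PosSemidef → (L σ).trace ≤ σ.trace) {ρ : Matrix (n × r) (n × r) ℂ}
    (hρ : ρ.PosSemidef) : (catchState L ρ).PosSemidef :=
  hρ.blockwise (traceLinearMap n ℂ ℂ - traceLinearMap m ℂ ℂ ∘ₗ L)
    fun σ hσ => sub_nonneg.mpr (hL σ hσ)

end CatchState

section CompletelyPositive

variable {n m p r : Type*} [Fintype n] [Fintype m] [Fintype p] [Fintype r]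

theorem IsCompletelyPositive.comp {Φ : Matrix m m ℂ → Matrix p p ℂ}
    {Ψ : Matrix n n ℂ → Matrix m m ℂ} (hΦ : IsCompletelyPositive Φ)
    (hΨ : IsCompletelyPositive Ψ) : IsCompletelyPositive (Φ ∘ Ψ) :=
  fun k _ _ ρ hρ => hΦ k _ (hΨ k ρ hρ)

theorem IsCompletelyPositive.add {Φ Ψ : Matrix n n ℂ → Matrix m m ℂ}
    (hΦ : IsCompletelyPositive Φ) (hΨ : IsCompletelyPositive Ψ) :
    IsCompletelyPositive (Φ + Ψ) :=
  fun k _ _ ρ hρ => (hΦ k ρ hρ).add (hΨ k ρ hρ)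

theorem isCompletelyPositive_ptrSecond :
    IsCompletelyPositive (ptrSecond : Matrix (n × r) (n × r) ℂ → Matrix n n ℂ) := by
  intro k _ _ ρ hρ
  let e : (n × k) × r → (n × r) × k := fun q => ((q.1.1, q.2), q.1.2)
  have h : matExt ptrSecond ρ = ptrSecond (ρ.submatrix e e) := by
    ext ⟨i, s⟩ ⟨j, t⟩
    rfl
  rw [h]
  exact posSemidef_ptrSecond (hρ.submatrix e)

theorem isCompletelyPositive_catchState (L : Matrix n n ℂ →ₗ[ℂ] Matrix m m ℂ)
    (hL : ∀ σ, σ.PosSemidef → (L σ).trace ≤ σ.trace) :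
    IsCompletelyPositive (catchState L : Matrix (n × r) (n × r) ℂ → Matrix r r ℂ) := by
  intro k _ _ ρ hρ
  let e : n × (r × k) → (n × r) × k := fun q => ((q.1, q.2.1), q.2.2)
  have h : matExt (catchState L) ρ = catchState L (ρ.submatrix e e) := by
    ext ⟨a, s⟩ ⟨b, t⟩
    rfl
  rw [h]
  exact posSemidef_catchState L hL (hρ.submatrix e)

end CompletelyPositive

theorem tryCatch_eq_add {n₀ n₁ m : Type*} [Fintype n₀] [Fintype n₁] [Fintype m]
    (Φ₀ : Matrix n₀ n₀ ℂ → Matrix m m ℂ) (L₁ : Matrix n₁ n₁ ℂ →ₗ[ℂ] Matrix m m ℂ) :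
    tryCatch Φ₀ L₁ = Φ₀ ∘ ptrSecond + L₁ ∘ catchState Φ₀ := by
  funext ρ
  exact (add_sub_assoc _ _ _).trans (congrArg _ (map_sub L₁ _ _).symm)

/-- The semantics of try/catch: `𝓕` agrees with the stated formula on product states,
is completely positive and trace non-increasing, and is trace-preserving whenever
`𝓔₀` (or `𝓔₁`) is. -/
theorem tryCatch_wellDefined {dH0 dH1 dK : Type*}
    [Fintype dH0] [Fintype dH1] [Fintype dK]
    (𝓔₀ : Matrix dH0 dH0 ℂ → Matrix dK dK ℂ)
    (𝓔₁ : Matrix dH1 dH1 ℂ → Matrix dK dK ℂ)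
    (hadd₀ : ∀ x y, 𝓔₀ (x + y) = 𝓔₀ x + 𝓔₀ y)
    (hsmul₀ : ∀ (c : ℂ) x, 𝓔₀ (c • x) = c • 𝓔₀ x)
    (hadd₁ : ∀ x y, 𝓔₁ (x + y) = 𝓔₁ x + 𝓔₁ y)
    (hsmul₁ : ∀ (c : ℂ) x, 𝓔₁ (c • x) = c • 𝓔₁ x)
    (hcp₀ : IsCompletelyPositive 𝓔₀) (hcp₁ : IsCompletelyPositive 𝓔₁)
    (htni₀ : ∀ ρ, ρ.PosSemidef → (𝓔₀ ρ).trace ≤ ρ.trace)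
    (htni₁ : ∀ ρ, ρ.PosSemidef → (𝓔₁ ρ).trace ≤ ρ.trace) :
    (∀ (ρ₀ : Matrix dH0 dH0 ℂ) (ρ₁ : Matrix dH1 dH1 ℂ),
      tryCatch 𝓔₀ 𝓔₁ (ρ₀ ⊗ₖ ρ₁)
        = ρ₁.trace • 𝓔₀ ρ₀ + (ρ₀.trace - (𝓔₀ ρ₀).trace) • 𝓔₁ ρ₁) ∧
    IsCompletelyPositive (tryCatch 𝓔₀ 𝓔₁) ∧
    (∀ ρ : Matrix (dH0 × dH1) (dH0 × dH1) ℂ, ρ.PosSemidef →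
      (tryCatch 𝓔₀ 𝓔₁ ρ).trace ≤ ρ.trace) ∧
    ((∀ ρ, (𝓔₀ ρ).trace = ρ.trace) →
      ∀ ρ, (tryCatch 𝓔₀ 𝓔₁ ρ).trace = ρ.trace) ∧
    ((∀ ρ, (𝓔₁ ρ).trace = ρ.trace) →
      ∀ ρ, (tryCatch 𝓔₀ 𝓔₁ ρ).trace = ρ.trace) := by
  let L₀ : Matrix dH0 dH0 ℂ →ₗ[ℂ] Matrix dK dK ℂ := ⟨⟨𝓔₀, hadd₀⟩, hsmul₀⟩
  let L₁ : Matrix dH1 dH1 ℂ →ₗ[ℂ] Matrix dK dK ℂ := ⟨⟨𝓔₁, hadd₁⟩, hsmul₁⟩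
  have hF : tryCatch 𝓔₀ 𝓔₁ = 𝓔₀ ∘ ptrSecond + 𝓔₁ ∘ catchState 𝓔₀ := tryCatch_eq_add 𝓔₀ L₁
  have htrace (ρ : Matrix (dH0 × dH1) (dH0 × dH1) ℂ) : (tryCatch 𝓔₀ 𝓔₁ ρ).trace =
      (𝓔₀ (ptrSecond ρ)).trace + (𝓔₁ (catchState 𝓔₀ ρ)).trace := by
    rw [hF, Pi.add_apply, trace_add, Function.comp_apply, Function.comp_apply]
  have hcatch (ρ : Matrix (dH0 × dH1) (dH0 × dH1) ℂ) :
      (catchState 𝓔₀ ρ).trace = ρ.trace - (𝓔₀ (ptrSecond ρ)).trace :=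
    trace_catchState L₀ ρ
  refine ⟨fun ρ₀ ρ₁ => ?_, ?_, fun ρ hρ => ?_, fun htp ρ => ?_, fun htp ρ => ?_⟩
  · have hcatch_kron : catchState 𝓔₀ (ρ₀ ⊗ₖ ρ₁) = (ρ₀.trace - (𝓔₀ ρ₀).trace) • ρ₁ :=
      catchState_kronecker L₀ ρ₀ ρ₁
    rw [hF, Pi.add_apply, Function.comp_apply, Function.comp_apply, ptrSecond_kronecker,
      hsmul₀, hcatch_kron, hsmul₁]
  · rw [hF]
    exact (hcp₀.comp isCompletelyPositive_ptrSecond).add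
      (hcp₁.comp (isCompletelyPositive_catchState L₀ htni₀))
  · calc (tryCatch 𝓔₀ 𝓔₁ ρ).trace
        ≤ (𝓔₀ (ptrSecond ρ)).trace + (catchState 𝓔₀ ρ).trace := by
          rw [htrace]
          exact add_le_add_right (htni₁ _ (posSemidef_catchState L₀ htni₀ hρ)) _
      _ = ρ.trace := by rw [hcatch, add_sub_cancel]
  · have h𝓔₁_zero : 𝓔₁ 0 = 0 := map_zero L₁
    rw [htrace, catchState_eq_zero_of_trace_eq htp, h𝓔₁_zero, trace_zero, add_zero, htp,
      trace_ptrSecond]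
  · rw [htrace, htp, hcatch, add_sub_cancel]
end
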